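/- Let S be a nonempty finite set of n elements (points of a metric space with metric d), fix a real l ≥ 0, and call an ordered r-tuple (w₁,...,w_r) of elements of S 'clustered' if for each index i there exists j ≠ i with d(w_i, w_j) ≤ l. Suppose moreover that for every point w ∈ S, the number of w' ∈ S with d(w,w') ≤ 2l is at most B. Then the number of clustered r-tuples is at most (4·B·n·r)^{r/2} for every even positive integer r. -/

import Mathlib

/-!
Call an index of a tuple fresh if its point is more than `2l` away from all earlier points.
In a clustered tuple the partner of a fresh index is not fresh, and two fresh indices cannot
share a partner (they would be `2l`-close), so at most `r/2` indices are fresh. Once the set `A`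
of fresh indices is fixed, the tuple is chosen coordinate by coordinate: a coordinate in `A` in
at most `n` ways, any other one in at most `min(n, rB)` ways, since it lies within `2l` of an
earlier point. So each of the at most `2^r` sets `A` contributes at most
`n^|A| min(n, rB)^(r - |A|) ≤ (nrB)^(r/2)` tuples.
-/

open Finset

theorem card_filter_forall_mem_le_prod {X : Type*} [DecidableEq X] {r : ℕ} (S : Finset X)
    (P : Fin r → (Fin r → X) → Finset X) (hP : ∀ i w w', (∀ j < i, w j = w' j) → P i w = P i w')
    (c : Fin r → ℕ) (hc : ∀ i w, #(P i w) ≤ c i) :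
    #{w ∈ Fintype.piFinset fun _ => S | ∀ i, w i ∈ P i w} ≤ ∏ i, c i := by
  induction r with
  | zero => exact (card_filter_le _ _).trans (by simp)
  | succ r ih =>
    rcases isEmpty_or_nonempty X with hX | ⟨⟨x₀⟩⟩
    · simp [eq_empty_of_isEmpty (α := Fin (r + 1) → X)]
    have hP₀ : ∀ w, P 0 w = P 0 fun _ => x₀ := fun w => hP 0 w _ (by simp)
    have hfiber : ∀ x, #{w ∈ {w ∈ Fintype.piFinset fun _ => S | ∀ i, w i ∈ P i w} | w 0 = x} ≤
        ∏ i : Fin r, c i.succ := by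
      intro x
      refine (card_le_card ?_).trans ((card_image_le (f := Fin.cons x)).trans
        (ih (fun i v => P i.succ (Fin.cons x v)) ?_ _ fun i v => hc i.succ _))
      · intro w hw
        simp only [mem_filter, Fintype.mem_piFinset] at hw
        obtain ⟨⟨hwS, hwP⟩, rfl⟩ := hw
        refine mem_image.2 ⟨Fin.tail w, ?_, Fin.cons_self_tail w⟩
        simp only [mem_filter, Fintype.mem_piFinset, Fin.tail, Fin.cons_self_tail]
        exact ⟨fun i => hwS i.succ, fun i => hwP i.succ⟩
      · intro i v v' h
        refine hP _ _ _ fun j hj => ?_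
        cases j using Fin.cases with
        | zero => rfl
        | succ j => exact h j (Fin.succ_lt_succ_iff.1 hj)
    calc _ ≤ (∏ i : Fin r, c i.succ) * #(P 0 fun _ => x₀) :=
          card_le_mul_card_image_of_maps_to (fun w hw => hP₀ w ▸ (mem_filter.1 hw).2 0) _
            fun x _ => hfiber x
      _ ≤ (∏ i : Fin r, c i.succ) * c 0 := Nat.mul_le_mul_left _ (hc 0 _)
      _ = ∏ i, c i := by rw [Fin.prod_univ_succ, mul_comm]

theorem pow_mul_pow_le_mul_pow {m n a b k : ℕ} (hmn : m ≤ n) (hab : a + b = k + k) (ha : a ≤ k) :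
    n ^ a * m ^ b ≤ (n * m) ^ k := by
  obtain ⟨d, rfl⟩ := Nat.exists_eq_add_of_le ha
  obtain rfl : b = a + d + d := by omega
  calc n ^ a * m ^ (a + d + d) = (n * m) ^ a * m ^ d * m ^ d := by ring
    _ ≤ (n * m) ^ a * n ^ d * m ^ d := by gcongr
    _ = (n * m) ^ (a + d) := by ring

section Clustered

variable {X ι : Type*} [PseudoMetricSpace X]

def IsClustered (l : ℝ) (w : ι → X) : Prop :=
  ∀ i, ∃ j, j ≠ i ∧ dist (w i) (w j) ≤ l

variable [Fintype ι] [LinearOrder ι]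

noncomputable def freshIndices (δ : ℝ) (w : ι → X) : Finset ι :=
  open Classical in {i | ∀ j < i, δ < dist (w i) (w j)}

@[simp]
theorem mem_freshIndices {δ : ℝ} {w : ι → X} {i : ι} :
    i ∈ freshIndices δ w ↔ ∀ j < i, δ < dist (w i) (w j) := by
  simp [freshIndices]

theorem two_mul_card_freshIndices_le {l : ℝ} {w : ι → X} (hw : IsClustered l w) :
    2 * #(freshIndices (2 * l) w) ≤ Fintype.card ι := by
  choose p hp_ne hp_dist using hw
  set A := freshIndices (2 * l) w
  have hp_compl : ∀ i ∈ A, p i ∈ Aᶜ := by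
    intro i hi
    rw [mem_compl]
    intro hpi
    rw [mem_freshIndices] at hi hpi
    have hd := hp_dist i
    rcases (hp_ne i).lt_or_gt with h | h
    · linarith [hi _ h, dist_nonneg (x := w i) (y := w (p i))]
    · linarith [hpi _ h, dist_comm (w i) (w (p i)), dist_nonneg (x := w i) (y := w (p i))]
  have hp_inj : Set.InjOn p A := by
    intro i hi i' hi' h
    by_contra hne
    wlog hlt : i < i' generalizing i i'
    · exact this hi' hi h.symm (Ne.symm hne) (lt_of_le_of_ne (not_lt.1 hlt) (Ne.symm hne))
    have hd := (mem_freshIndices.1 hi') i hlt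
    have hd' := hp_dist i
    rw [h] at hd'
    linarith [dist_triangle (w i') (w (p i')) (w i), hp_dist i', dist_comm (w (p i')) (w i)]
  have := card_le_card_of_injOn p hp_compl hp_inj
  rw [card_compl] at this
  omega

variable [DecidableEq X]

theorem card_filter_freshIndices_eq_le
    {r B : ℕ} {δ : ℝ} (S : Finset X) (hB : ∀ x ∈ S, #{y ∈ S | dist x y ≤ δ} ≤ B)
    (A : Finset (Fin r)) :
    #{w ∈ Fintype.piFinset fun _ => S | freshIndices δ w = A} ≤
      #S ^ #A * min #S (r * B) ^ #Aᶜ := by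
  let P : Fin r → (Fin r → X) → Finset X := fun i w =>
    if i ∈ A then S
    else ({j | j < i ∧ w j ∈ S} : Finset (Fin r)).biUnion fun j => {y ∈ S | dist (w j) y ≤ δ}
  have hP : ∀ i w w', (∀ j < i, w j = w' j) → P i w = P i w' := by
    intro i w w' h
    simp only [P]
    split_ifs
    · rfl
    · apply biUnion_congr
      · ext j
        simp only [mem_filter, mem_univ, true_and]
        exact and_congr_right fun hj => by rw [h j hj]
      · intro j hj
        rw [h j (mem_filter.1 hj).2.1]
  have hc : ∀ i w, #(P i w) ≤ if i ∈ A then #S else min #S (r * B) := by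
    intro i w
    simp only [P]
    split_ifs
    · rfl
    · refine le_min (card_le_card (biUnion_subset.2 fun _ _ => filter_subset _ _)) ?_
      refine (card_biUnion_le_card_mul _ _ B fun j hj => (hB _ (mem_filter.1 hj).2.2)).trans ?_
      exact Nat.mul_le_mul_right _ ((card_le_univ _).trans (Fintype.card_fin r).le)
  have hsub : {w ∈ Fintype.piFinset fun _ : Fin r => S | freshIndices δ w = A} ⊆
      {w ∈ Fintype.piFinset fun _ : Fin r => S | ∀ i, w i ∈ P i w} := by
    intro w hw
    simp only [mem_filter, Fintype.mem_piFinset] at hw ⊢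
    obtain ⟨hwS, rfl⟩ := hw
    refine ⟨hwS, fun i => ?_⟩
    simp only [P]
    split_ifs with hi
    · exact hwS i
    · obtain ⟨j, hji, hd⟩ : ∃ j < i, dist (w i) (w j) ≤ δ := by simpa using hi
      exact mem_biUnion.2
        ⟨j, by simp [hji, hwS j], mem_filter.2 ⟨hwS i, dist_comm (w i) (w j) ▸ hd⟩⟩
  calc _ ≤ _ := card_le_card hsub
    _ ≤ _ := card_filter_forall_mem_le_prod S P hP _ hc
    _ = _ := by
      rw [prod_ite, prod_const, prod_const, ← compl_filter, filter_mem_eq_inter, univ_inter]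

open Classical in
theorem card_filter_isClustered_le
    {k B : ℕ} {l : ℝ} (S : Finset X) (hB : ∀ x ∈ S, #{y ∈ S | dist x y ≤ 2 * l} ≤ B) :
    #{w ∈ Fintype.piFinset fun _ : Fin (k + k) => S | IsClustered l w} ≤
      (#S * ((k + k) * B)) ^ k * 4 ^ k := by
  set T := {w ∈ Fintype.piFinset fun _ : Fin (k + k) => S | IsClustered l w}
  have hfiber : ∀ A ∈ T.image (freshIndices (2 * l)),
      #{w ∈ T | freshIndices (2 * l) w = A} ≤ (#S * ((k + k) * B)) ^ k := by
    intro A hA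
    obtain ⟨w, hwT, rfl⟩ := mem_image.1 hA
    have hw := two_mul_card_freshIndices_le (mem_filter.1 hwT).2
    rw [Fintype.card_fin] at hw
    calc _ ≤ #{v ∈ Fintype.piFinset fun _ => S |
            freshIndices (2 * l) v = freshIndices (2 * l) w} :=
          card_le_card (filter_subset_filter _ (filter_subset _ _))
      _ ≤ #S ^ _ * min #S ((k + k) * B) ^ _ := card_filter_freshIndices_eq_le S hB _
      _ ≤ (#S * min #S ((k + k) * B)) ^ k :=
          pow_mul_pow_le_mul_pow (min_le_left _ _)
            (by rw [card_add_card_compl, Fintype.card_fin]) (by omega)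
      _ ≤ (#S * ((k + k) * B)) ^ k := by gcongr; exact min_le_right _ _
  calc #T ≤ (#S * ((k + k) * B)) ^ k * #(T.image (freshIndices (2 * l))) :=
        card_le_mul_card_image T _ hfiber
    _ ≤ (#S * ((k + k) * B)) ^ k * 4 ^ k := by
        gcongr
        calc _ ≤ Fintype.card (Finset (Fin (k + k))) := card_le_univ _
          _ = 4 ^ k := by rw [Fintype.card_finset, Fintype.card_fin, pow_add, ← mul_pow]; rfl

end Clustered

theorem card_clustered_tuples_le_general {X : Type*} [MetricSpace X]
    (S : Finset X) (n : ℕ) (hn : S.card = n)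
    (l : ℝ) (B : ℕ)
    (hB : ∀ w ∈ S, (S.filter (fun w' => dist w w' ≤ 2 * l)).card ≤ B)
    (r : ℕ) (hr : Even r) :
    {w : Fin r → X | (∀ i, w i ∈ S) ∧
        ∀ i, ∃ j, j ≠ i ∧ dist (w i) (w j) ≤ l}.Finite ∧
      {w : Fin r → X | (∀ i, w i ∈ S) ∧
        ∀ i, ∃ j, j ≠ i ∧ dist (w i) (w j) ≤ l}.ncard ≤ (4 * B * n * r) ^ (r / 2) := by
  classical
  obtain ⟨k, rfl⟩ := hr
  set T := {w ∈ Fintype.piFinset fun _ : Fin (k + k) => S | IsClustered l w}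
  have hT : {w : Fin (k + k) → X | (∀ i, w i ∈ S) ∧
      ∀ i, ∃ j, j ≠ i ∧ dist (w i) (w j) ≤ l} = T := by
    ext w
    rw [mem_coe, mem_filter, Fintype.mem_piFinset]
    rfl
  rw [hT, Set.ncard_coe_finset]
  refine ⟨T.finite_toSet, (card_filter_isClustered_le S hB).trans_eq ?_⟩
  rw [hn, show (k + k) / 2 = k by omega, ← mul_pow]
  ring_nf

/-- Lemma 3.1 (abstract version): in a finite set `S` of `n` points of a metric
space in which every closed ball of radius `2l` centred at a point of `S`
contains at most `B` points of `S`, the number of ordered `r`-tuples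
`(w₁,…,w_r)` of points of `S` such that every `w_i` is within distance `l` of
some `w_j`, `j ≠ i`, is at most `(4·B·n·r)^{r/2}` for even positive `r`. -/
theorem card_clustered_tuples_le {X : Type*} [MetricSpace X]
    (S : Finset X) (hS : S.Nonempty) (n : ℕ) (hn : S.card = n)
    (l : ℝ) (hl : 0 ≤ l) (B : ℕ)
    (hB : ∀ w ∈ S, (S.filter (fun w' => dist w w' ≤ 2 * l)).card ≤ B)
    (r : ℕ) (hr : Even r) (hrpos : 0 < r) :
    {w : Fin r → X | (∀ i, w i ∈ S) ∧
        ∀ i, ∃ j, j ≠ i ∧ dist (w i) (w j) ≤ l}.Finite ∧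
      {w : Fin r → X | (∀ i, w i ∈ S) ∧
        ∀ i, ∃ j, j ≠ i ∧ dist (w i) (w j) ≤ l}.ncard ≤ (4 * B * n * r) ^ (r / 2) :=
  card_clustered_tuples_le_general S n hn l B hB r hr
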